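/- Let O = {r ⊑ s, r ⊑ s'}, C₀ = ∃r.⊤, Σ = {s, s'}, and n ≥ 2. Then every (Σ,n)-uniform interpolant U of C₀ under O has size at least Tower(n−2), where Tower(0)=1 and Tower(k+1)=2^Tower(k). -/

import Mathlib

/-!
A tree of depth `j + 1` is a set of trees of depth `j`, so there are `Tower j` trees of depth `j`,
and in the tree model each one is pinned down by an `ALC({s})` concept `χ_T` of role depth `j`.
Adding, for all trees `T, T'` of depth `n - 1`, a root whose `s`-successor is `T` and whose
`s'`-successor is `T'` (and which has an `r`-successor iff `T = T'`) gives a model of the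
ontology. If `U` had fewer than `Tower (n - 2)` symbols, it would have fewer subconcepts, so two
distinct trees `T ≠ T'` would satisfy the same subconcepts of `U`. The root `(T, T)` satisfies
`∃r.⊤`, hence `U`, and then so does `(T, T')`; but `(T, T')` refutes `∃s.χ_T' ⊔ ∃s'.¬χ_T'`, a
consequence of `∃r.⊤` of role depth `n`.
-/

namespace DL

/-- ALCQ concepts over concept names `Cn` and role names `Rn`. -/
inductive Concept (Cn Rn : Type) : Type
  | top : Concept Cn Rn
  | atom : Cn → Concept Cn Rn
  | neg : Concept Cn Rn → Concept Cn Rn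
  | conj : Concept Cn Rn → Concept Cn Rn → Concept Cn Rn
  | atLeast : ℕ → Rn → Concept Cn Rn → Concept Cn Rn
  deriving DecidableEq

namespace Concept
variable {Cn Rn : Type}

/-- ∃r.C -/
def ex (r : Rn) (c : Concept Cn Rn) : Concept Cn Rn := atLeast 1 r c
/-- ∀r.C -/
def all (r : Rn) (c : Concept Cn Rn) : Concept Cn Rn := neg (atLeast 1 r (neg c))
def disj (c d : Concept Cn Rn) : Concept Cn Rn := neg (conj (neg c) (neg d))
def impl (c d : Concept Cn Rn) : Concept Cn Rn := disj (neg c) d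
def bot : Concept Cn Rn := neg top

/-- an ALC concept: all number restrictions are existential restrictions. -/
def isALC : Concept Cn Rn → Prop
  | top => True
  | atom _ => True
  | neg c => c.isALC
  | conj c d => c.isALC ∧ d.isALC
  | atLeast n _ c => n = 1 ∧ c.isALC

/-- size (number of symbols) of a concept. -/
def size : Concept Cn Rn → ℕ
  | top => 1
  | atom _ => 1
  | neg c => c.size + 1
  | conj c d => c.size + d.size + 1
  | atLeast n _ c => c.size + n + 2

/-- role depth of a concept. -/
def roleDepth : Concept Cn Rn → ℕ
  | top => 0
  | atom _ => 0
  | neg c => c.roleDepth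
  | conj c d => max c.roleDepth d.roleDepth
  | atLeast _ _ c => c.roleDepth + 1

end Concept

/-- big conjunction of a list of concepts -/
def bigConj {Cn Rn : Type} : List (Concept Cn Rn) → Concept Cn Rn
  | [] => Concept.top
  | c :: l => Concept.conj c (bigConj l)

/-- big disjunction of a list of concepts -/
def bigDisj {Cn Rn : Type} (l : List (Concept Cn Rn)) : Concept Cn Rn :=
  Concept.neg (bigConj (l.map Concept.neg))

/-- a signature: a set of concept names and a set of role names. -/
structure Sig (Cn Rn : Type) where
  cs : Set Cn
  rs : Set Rn

/-- the concept uses only symbols from the signature σ. -/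
def Concept.inSig {Cn Rn : Type} (σ : Sig Cn Rn) : Concept Cn Rn → Prop
  | .top => True
  | .atom A => A ∈ σ.cs
  | .neg c => c.inSig σ
  | .conj c d => c.inSig σ ∧ d.inSig σ
  | .atLeast _ r c => r ∈ σ.rs ∧ c.inSig σ

/-- an interpretation I = (Δ^I, ·^I). -/
structure Interp (Cn Rn : Type) : Type 1 where
  Dom : Type
  atomI : Cn → Set Dom
  roleI : Rn → Set (Dom × Dom)

/-- extension C^I of a concept in an interpretation. -/
def Concept.sem {Cn Rn : Type} (I : Interp Cn Rn) : Concept Cn Rn → Set I.Dom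
  | .top => Set.univ
  | .atom A => I.atomI A
  | .neg c => (c.sem I)ᶜ
  | .conj c d => c.sem I ∩ d.sem I
  | .atLeast n r c =>
      {x | ∃ s : Finset I.Dom, n ≤ s.card ∧ ∀ e ∈ s, (x, e) ∈ I.roleI r ∧ e ∈ c.sem I}

/-- an ontology: concept inclusions and role inclusions. -/
structure Ontology (Cn Rn : Type) where
  cis : Set (Concept Cn Rn × Concept Cn Rn)
  ris : Set (Rn × Rn)

def Interp.isModel {Cn Rn : Type} (I : Interp Cn Rn) (O : Ontology Cn Rn) : Prop :=
  (∀ p ∈ O.cis, Concept.sem I p.1 ⊆ Concept.sem I p.2) ∧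
  (∀ p ∈ O.ris, I.roleI p.1 ⊆ I.roleI p.2)

/-- O ⊨ c ⊑ d -/
def entails {Cn Rn : Type} (O : Ontology Cn Rn) (c d : Concept Cn Rn) : Prop :=
  ∀ I : Interp Cn Rn, I.isModel O → c.sem I ⊆ d.sem I

/-- O ⊨ r ⊑ s for role names -/
def roleEnt {Cn Rn : Type} (O : Ontology Cn Rn) (r s : Rn) : Prop :=
  ∀ I : Interp Cn Rn, I.isModel O → I.roleI r ⊆ I.roleI s

/-- Z is a Σ-bisimulation between I and J. -/
def IsBisim {Cn Rn : Type} (σ : Sig Cn Rn) (I J : Interp Cn Rn)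
    (Z : Set (I.Dom × J.Dom)) : Prop :=
  ∀ d e, (d, e) ∈ Z →
    (∀ A ∈ σ.cs, d ∈ I.atomI A ↔ e ∈ J.atomI A) ∧
    (∀ r ∈ σ.rs, ∀ d', (d, d') ∈ I.roleI r → ∃ e', (e, e') ∈ J.roleI r ∧ (d', e') ∈ Z) ∧
    (∀ r ∈ σ.rs, ∀ e', (e, e') ∈ J.roleI r → ∃ d', (d, d') ∈ I.roleI r ∧ (d', e') ∈ Z)

/-- pointed interpretations are Σ-bisimilar. -/
def Bisimilar {Cn Rn : Type} (σ : Sig Cn Rn) (I : Interp Cn Rn) (d : I.Dom)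
    (J : Interp Cn Rn) (e : J.Dom) : Prop :=
  ∃ Z, IsBisim σ I J Z ∧ (d, e) ∈ Z

/-- E is an ALC(Σ) interpolant for O ⊨ c ⊑ d. -/
def IsInterpolant {Cn Rn : Type} (O : Ontology Cn Rn) (σ : Sig Cn Rn)
    (c d E : Concept Cn Rn) : Prop :=
  E.isALC ∧ E.inSig σ ∧ entails O c E ∧ entails O E d

/-- c and d are jointly ∼_{ALC,Σ}-consistent under O. -/
def JointlyConsistent {Cn Rn : Type} (O : Ontology Cn Rn) (σ : Sig Cn Rn)
    (c d : Concept Cn Rn) : Prop :=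
  ∃ (I₁ I₂ : Interp Cn Rn) (d₁ : I₁.Dom) (d₂ : I₂.Dom),
    I₁.isModel O ∧ I₂.isModel O ∧ d₁ ∈ c.sem I₁ ∧ d₂ ∈ d.sem I₂ ∧ Bisimilar σ I₁ d₁ I₂ d₂

/-- semantics of a set of concepts viewed as conjunction. -/
def setSem {Cn Rn : Type} (I : Interp Cn Rn) (t : Set (Concept Cn Rn)) : Set I.Dom :=
  {x | ∀ c ∈ t, x ∈ c.sem I}

/-- the type of an element: concepts from sub true at x. -/
def tpSet {Cn Rn : Type} (I : Interp Cn Rn) (sub : Set (Concept Cn Rn)) (x : I.Dom) :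
    Set (Concept Cn Rn) :=
  {c | c ∈ sub ∧ x ∈ c.sem I}

/-- t is a type for O (realizable subset of sub). -/
def IsTypeFor {Cn Rn : Type} (O : Ontology Cn Rn) (sub : Set (Concept Cn Rn))
    (t : Set (Concept Cn Rn)) : Prop :=
  ∃ (I : Interp Cn Rn) (x : I.Dom), I.isModel O ∧ t = tpSet I sub x

/-- t_{/r} = {C : ∀r.C ∈ t} -/
def slash {Cn Rn : Type} (t : Set (Concept Cn Rn)) (r : Rn) : Set (Concept Cn Rn) :=
  {c | Concept.all r c ∈ t}

/-- t ⤳_r t' -/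
def typeStep {Cn Rn : Type} (r : Rn) (t t' : Set (Concept Cn Rn)) : Prop :=
  slash t r ⊆ t'

/-- T ⤳_s T' for mosaics -/
def mosaicStep {Cn Rn : Type} (s : Rn) (T T' : Set (Set (Concept Cn Rn))) : Prop :=
  ∀ t ∈ T, ∃ t' ∈ T', typeStep s t t'

/-- O ⊨ t ⊑ D for a type t viewed as conjunction. -/
def entailsSet {Cn Rn : Type} (O : Ontology Cn Rn) (t : Set (Concept Cn Rn))
    (D : Concept Cn Rn) : Prop :=
  ∀ I : Interp Cn Rn, I.isModel O → setSem I t ⊆ D.sem I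

/-- iterated exponential -/
def Tower : ℕ → ℕ
  | 0 => 1
  | n + 1 => 2 ^ Tower n

/-- U is a (Σ,n)-uniform interpolant of c₀ under O. -/
def UniformInterpolant {Cn Rn : Type} (O : Ontology Cn Rn) (σ : Sig Cn Rn)
    (c₀ : Concept Cn Rn) (n : ℕ) (U : Concept Cn Rn) : Prop :=
  U.isALC ∧ U.inSig σ ∧ entails O c₀ U ∧
  ∀ E : Concept Cn Rn, E.isALC → E.inSig σ → E.roleDepth ≤ n →
    entails O c₀ E → entails O U E

/-- the ontology {r ⊑ s, r ⊑ s'} with r = 0, s = 1, s' = 2. -/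
def O11 : Ontology ℕ (Fin 3) := ⟨∅, {(0, 1), (0, 2)}⟩

/-- the signature Σ = {s, s'}. -/
def σ11 : Sig ℕ (Fin 3) := ⟨∅, {1, 2}⟩

open DL.Concept

namespace Concept

variable {Cn Rn : Type} {I : Interp Cn Rn}

theorem mem_sem_atLeast_one {r : Rn} {c : Concept Cn Rn} {x : I.Dom} :
    x ∈ (atLeast 1 r c).sem I ↔ ∃ y, (x, y) ∈ I.roleI r ∧ y ∈ c.sem I := by
  simp only [sem, Set.mem_ofPred_eq, Finset.one_le_card]
  constructor
  · rintro ⟨s, ⟨y, hy⟩, hs⟩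
    exact ⟨y, hs y hy⟩
  · rintro ⟨y, hy⟩
    exact ⟨{y}, Finset.singleton_nonempty y, by simpa using hy⟩

theorem mem_sem_disj {c d : Concept Cn Rn} {x : I.Dom} :
    x ∈ (disj c d).sem I ↔ x ∈ c.sem I ∨ x ∈ d.sem I := by
  simp only [disj, sem, Set.mem_compl_iff, Set.mem_inter_iff]
  tauto

end Concept

section BigConj

variable {Cn Rn : Type} {l : List (Concept Cn Rn)}

theorem mem_sem_bigConj {I : Interp Cn Rn} {x : I.Dom} :
    x ∈ (bigConj l).sem I ↔ ∀ c ∈ l, x ∈ c.sem I := by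
  induction l with
  | nil => simp [bigConj, sem]
  | cons c l ih => simp [bigConj, sem, ih]

theorem isALC_bigConj (h : ∀ c ∈ l, c.isALC) : (bigConj l).isALC := by
  induction l with
  | nil => trivial
  | cons c l ih => simp_all [bigConj, isALC]

theorem inSig_bigConj {σ : Sig Cn Rn} (h : ∀ c ∈ l, c.inSig σ) : (bigConj l).inSig σ := by
  induction l with
  | nil => trivial
  | cons c l ih => simp_all [bigConj, inSig]

theorem roleDepth_bigConj_le {k : ℕ} (h : ∀ c ∈ l, c.roleDepth ≤ k) :
    (bigConj l).roleDepth ≤ k := by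
  induction l with
  | nil => simp [bigConj, roleDepth]
  | cons c l ih => simp_all [bigConj, roleDepth]

end BigConj

theorem entails_ex_top_disj {Cn Rn : Type} {O : Ontology Cn Rn} {r s s' : Rn}
    (hs : roleEnt O r s) (hs' : roleEnt O r s') (c : Concept Cn Rn) :
    entails O (ex r top) (disj (ex s c) (ex s' (neg c))) := by
  intro I hI x hx
  obtain ⟨y, hy, -⟩ := mem_sem_atLeast_one.mp hx
  rw [mem_sem_disj]
  by_cases hc : y ∈ c.sem I
  · exact Or.inl (mem_sem_atLeast_one.mpr ⟨y, hs I hI hy, hc⟩)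
  · exact Or.inr (mem_sem_atLeast_one.mpr ⟨y, hs' I hI hy, hc⟩)

theorem roleEnt_O11 {s : Fin 3} (hs : s ∈ σ11.rs) : roleEnt O11 0 s := fun _ hI =>
  hI.2 (0, s) (by simpa [O11, σ11] using hs)

namespace Concept

variable {Cn Rn : Type} [DecidableEq Cn] [DecidableEq Rn]

def subs : Concept Cn Rn → Finset (Concept Cn Rn)
  | top => {top}
  | atom A => {atom A}
  | neg c => insert (neg c) c.subs
  | conj c d => insert (conj c d) (c.subs ∪ d.subs)
  | atLeast m r c => insert (atLeast m r c) c.subs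

theorem mem_subs_self (c : Concept Cn Rn) : c ∈ c.subs := by
  cases c <;> simp [subs]

theorem card_subs_le_size (c : Concept Cn Rn) : c.subs.card ≤ c.size := by
  induction c with
  | top | atom => simp [subs, size]
  | neg c ih => exact (Finset.card_insert_le _ _).trans (by simp [size, ih])
  | conj c d ihc ihd =>
    refine (Finset.card_insert_le _ _).trans ?_
    have := Finset.card_union_le c.subs d.subs
    simp only [size]
    omega
  | atLeast m r c ih =>
    refine (Finset.card_insert_le _ _).trans ?_
    simp only [size]
    omega

end Concept

def Tree : ℕ → Type
  | 0 => Unit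
  | j + 1 => Tree j → Bool

noncomputable instance Tree.instFintype : (j : ℕ) → Fintype (Tree j)
  | 0 => inferInstanceAs (Fintype Unit)
  | j + 1 =>
    letI := Tree.instFintype j
    open Classical in inferInstanceAs (Fintype (Tree j → Bool))

theorem Tree.card_eq_tower : ∀ j, Fintype.card (Tree j) = Tower j
  | 0 => Fintype.card_unit
  | j + 1 => by
    rw [Tower, ← Tree.card_eq_tower j, Fintype.card_eq_nat_card, Fintype.card_eq_nat_card]
    exact Nat.card_fun.trans (by simp)

abbrev Node : Type := Σ j, Tree j

def Node.IsChild : Node → Node → Prop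
  | ⟨0, _⟩, _ => False
  | ⟨j + 1, a⟩, ⟨k, b⟩ => ∃ h : k = j, a (h ▸ b) = true

theorem Node.isChild_succ_iff {j : ℕ} {a : Tree (j + 1)} {q : Node} :
    Node.IsChild ⟨j + 1, a⟩ q ↔ ∃ b, q = ⟨j, b⟩ ∧ a b = true := by
  obtain ⟨k, b⟩ := q
  constructor
  · rintro ⟨rfl, h⟩
    exact ⟨b, rfl, h⟩
  · rintro ⟨b', h, hb⟩
    cases h
    exact ⟨rfl, hb⟩

def treeEdge (ℓ : ℕ) (r : Fin 3) : Node ⊕ (Tree ℓ × Tree ℓ) → Node ⊕ (Tree ℓ × Tree ℓ) → Prop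
  | .inl p, .inl q => r ≠ 0 ∧ p.IsChild q
  | .inr (T, T'), .inl p => p = ⟨ℓ, if r = 2 then T' else T⟩ ∧ (r = 0 → T = T')
  | _, .inr _ => False

abbrev treeModel (ℓ : ℕ) : Interp ℕ (Fin 3) where
  Dom := Node ⊕ (Tree ℓ × Tree ℓ)
  atomI _ := ∅
  roleI r := {e | treeEdge ℓ r e.1 e.2}

theorem treeModel_isModel (ℓ : ℕ) : (treeModel ℓ).isModel O11 := by
  refine ⟨by simp [O11], ?_⟩
  rintro _ (rfl | rfl) ⟨p | ⟨T, T'⟩, q | _⟩ h <;> simp_all [treeEdge]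

theorem treeModel_node_edge {ℓ : ℕ} {r : Fin 3} (hr : r ≠ 0) {p : Node}
    {e : (treeModel ℓ).Dom} :
    (.inl p, e) ∈ (treeModel ℓ).roleI r ↔ ∃ q, e = .inl q ∧ p.IsChild q := by
  rcases e with q | _ <;> simp [treeEdge, hr]

theorem root_mem_sem_atLeast_one {ℓ : ℕ} {T T' : Tree ℓ} {r : Fin 3}
    {c : Concept ℕ (Fin 3)} :
    (.inr (T, T') : (treeModel ℓ).Dom) ∈ (atLeast 1 r c).sem (treeModel ℓ) ↔
      (r = 0 → T = T') ∧
        (.inl ⟨ℓ, if r = 2 then T' else T⟩ : (treeModel ℓ).Dom) ∈ c.sem (treeModel ℓ) := by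
  rw [mem_sem_atLeast_one]
  constructor
  · rintro ⟨p | _, ⟨rfl, h⟩, hc⟩
    exact ⟨h, hc⟩
  · rintro ⟨h, hc⟩
    exact ⟨.inl _, ⟨rfl, h⟩, hc⟩

noncomputable def charConcept : (j : ℕ) → Tree j → Concept ℕ (Fin 3)
  | 0, _ => top
  | j + 1, t => bigConj ((Finset.univ : Finset (Tree j)).toList.map fun u =>
      if t u then ex 1 (charConcept j u) else neg (ex 1 (charConcept j u)))

theorem isALC_charConcept : ∀ (j : ℕ) (t : Tree j), (charConcept j t).isALC
  | 0, _ => trivial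
  | j + 1, t => isALC_bigConj (by
      simp only [List.mem_map, forall_exists_index, and_imp, forall_apply_eq_imp_iff₂]
      intro u _
      split_ifs <;> exact ⟨rfl, isALC_charConcept j u⟩)

theorem inSig_charConcept : ∀ (j : ℕ) (t : Tree j), (charConcept j t).inSig σ11
  | 0, _ => trivial
  | j + 1, t => inSig_bigConj (by
      simp only [List.mem_map, forall_exists_index, and_imp, forall_apply_eq_imp_iff₂]
      intro u _
      split_ifs <;> exact ⟨by simp [σ11], inSig_charConcept j u⟩)

theorem roleDepth_charConcept_le : ∀ (j : ℕ) (t : Tree j), (charConcept j t).roleDepth ≤ j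
  | 0, _ => le_rfl
  | j + 1, t => roleDepth_bigConj_le (by
      simp only [List.mem_map, forall_exists_index, and_imp, forall_apply_eq_imp_iff₂]
      intro u _
      split_ifs <;> simpa [ex, roleDepth] using roleDepth_charConcept_le j u)

theorem mem_sem_charConcept {ℓ : ℕ} :
    ∀ (j : ℕ) (u t : Tree j),
      (.inl ⟨j, u⟩ : (treeModel ℓ).Dom) ∈ (charConcept j t).sem (treeModel ℓ) ↔ u = t
  | 0, u, t => by simp [charConcept, sem, Subsingleton.elim (α := Unit) u t]
  | j + 1, u, t => by
    have hchild : ∀ w, (.inl ⟨j + 1, u⟩ : (treeModel ℓ).Dom) ∈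
        (ex 1 (charConcept j w)).sem (treeModel ℓ) ↔ u w = true := by
      intro w
      rw [ex, mem_sem_atLeast_one]
      constructor
      · rintro ⟨e, he, hw⟩
        obtain ⟨q, rfl, hq⟩ := (treeModel_node_edge one_ne_zero).mp he
        obtain ⟨b, rfl, hb⟩ := Node.isChild_succ_iff.mp hq
        rwa [(mem_sem_charConcept j b w).mp hw] at hb
      · intro h
        exact ⟨.inl ⟨j, w⟩, (treeModel_node_edge one_ne_zero).mpr
          ⟨_, rfl, Node.isChild_succ_iff.mpr ⟨w, rfl, h⟩⟩, (mem_sem_charConcept j w w).mpr rfl⟩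
    rw [charConcept, mem_sem_bigConj]
    simp only [List.mem_map, Finset.mem_toList, Finset.mem_univ, true_and, forall_exists_index,
      forall_apply_eq_imp_iff]
    refine ⟨fun h => funext fun w => ?_, fun h w => ?_⟩
    · specialize h w
      cases htw : t w <;> simp_all [sem]
    · subst h
      cases huw : u w <;> simp_all [sem]

theorem root_mem_sem_iff_of_subs_agree {ℓ : ℕ} {T T' : Tree ℓ} {U : Concept ℕ (Fin 3)}
    (hALC : U.isALC) (hSig : U.inSig σ11)
    (hagree : ∀ D ∈ U.subs, ((.inl ⟨ℓ, T⟩ : (treeModel ℓ).Dom) ∈ D.sem (treeModel ℓ) ↔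
      (.inl ⟨ℓ, T'⟩ : (treeModel ℓ).Dom) ∈ D.sem (treeModel ℓ))) :
    (.inr (T, T') : (treeModel ℓ).Dom) ∈ U.sem (treeModel ℓ) ↔
      (.inr (T, T) : (treeModel ℓ).Dom) ∈ U.sem (treeModel ℓ) := by
  induction U with
  | top | atom => simp [sem]
  | neg c ih =>
    simp only [sem, Set.mem_compl_iff, ih hALC hSig fun D hD => hagree D (by simp [subs, hD])]
  | conj c d ihc ihd =>
    simp only [sem, Set.mem_inter_iff, ihc hALC.1 hSig.1 fun D hD => hagree D (by simp [subs, hD]),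
      ihd hALC.2 hSig.2 fun D hD => hagree D (by simp [subs, hD])]
  | atLeast m r c =>
    obtain ⟨rfl, -⟩ := hALC
    have hc := hagree c (by simp [subs, mem_subs_self])
    rw [root_mem_sem_atLeast_one, root_mem_sem_atLeast_one]
    rcases hSig.1 with rfl | rfl
    · simp
    · simp [hc]

theorem eq_of_subs_agree {n ℓ : ℕ} {U : Concept ℕ (Fin 3)}
    (hU : UniformInterpolant O11 σ11 (ex 0 top) n U) (hℓ : ℓ + 1 ≤ n) {T T' : Tree ℓ}
    (hagree : ∀ D ∈ U.subs, ((.inl ⟨ℓ, T⟩ : (treeModel ℓ).Dom) ∈ D.sem (treeModel ℓ) ↔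
      (.inl ⟨ℓ, T'⟩ : (treeModel ℓ).Dom) ∈ D.sem (treeModel ℓ))) :
    T = T' := by
  obtain ⟨hALC, hSig, hC₀U, hUmin⟩ := hU
  have hM := treeModel_isModel ℓ
  have hdiag : (.inr (T, T) : (treeModel ℓ).Dom) ∈ U.sem (treeModel ℓ) := by
    refine hC₀U _ hM ?_
    rw [ex, root_mem_sem_atLeast_one]
    simp [sem]
  have hroot := (root_mem_sem_iff_of_subs_agree hALC hSig hagree).mpr hdiag
  have hs : (1 : Fin 3) ∈ σ11.rs := by simp [σ11]
  have hs' : (2 : Fin 3) ∈ σ11.rs := by simp [σ11]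
  have hχ := roleDepth_charConcept_le ℓ T'
  have hUE := hUmin (disj (ex 1 (charConcept ℓ T')) (ex 2 (neg (charConcept ℓ T'))))
    ⟨⟨rfl, isALC_charConcept ℓ T'⟩, rfl, isALC_charConcept ℓ T'⟩
    ⟨⟨hs, inSig_charConcept ℓ T'⟩, hs', inSig_charConcept ℓ T'⟩
    (by simp only [disj, ex, roleDepth]; omega)
    (entails_ex_top_disj (roleEnt_O11 hs) (roleEnt_O11 hs') _)
  have hE := hUE _ hM hroot
  rw [mem_sem_disj, ex, ex, root_mem_sem_atLeast_one, root_mem_sem_atLeast_one] at hE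
  simp only [sem, Set.mem_compl_iff] at hE
  rw [mem_sem_charConcept, mem_sem_charConcept] at hE
  simpa using hE

theorem tower_le_two_pow_card_subs {n ℓ : ℕ} {U : Concept ℕ (Fin 3)}
    (hU : UniformInterpolant O11 σ11 (ex 0 top) n U) (hℓ : ℓ + 1 ≤ n) :
    Tower ℓ ≤ 2 ^ U.subs.card := by
  let type (T : Tree ℓ) : Set U.subs :=
    {D | (.inl ⟨ℓ, T⟩ : (treeModel ℓ).Dom) ∈ D.1.sem (treeModel ℓ)}
  have htype : Function.Injective type := fun T T' h =>
    eq_of_subs_agree hU hℓ fun D hD => Set.ext_iff.mp h ⟨D, hD⟩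
  calc Tower ℓ = Fintype.card (Tree ℓ) := (Tree.card_eq_tower ℓ).symm
    _ ≤ Fintype.card (Set U.subs) := Fintype.card_le_of_injective type htype
    _ = 2 ^ U.subs.card := by simp [Fintype.card_set]

/-- Theorem 2: every (Σ,n)-uniform interpolant of ∃r.⊤ under {r ⊑ s, r ⊑ s'}
has size at least Tower(n−2) for n ≥ 2. -/
theorem uniform_interpolant_lower_bound (n : ℕ) (hn : 2 ≤ n) (U : Concept ℕ (Fin 3))
    (hU : UniformInterpolant O11 σ11 (Concept.ex 0 Concept.top) n U) :
    Tower (n - 2) ≤ U.size := by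
  obtain ⟨k, rfl⟩ := Nat.exists_eq_add_of_le' hn
  calc Tower (k + 2 - 2) = Tower k := rfl
    _ ≤ U.subs.card :=
      (Nat.pow_le_pow_iff_right one_lt_two).mp (tower_le_two_pow_card_subs hU le_rfl)
    _ ≤ U.size := card_subs_le_size U

end DL
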